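/- Assume each conjugate ℓ_i* is γ-strongly convex with γ ≥ 0. Then the dual objective D satisfies the strong concavity estimate: for all α, α̂ ∈ ℝ^n and all η ∈ [0,1], D(η·α̂ + (1−η)·α) ≥ η·D(α̂) + (1−η)·D(α) + (γ·η·(1−η)/(2n))·‖α̂ − α‖². -/

import Mathlib

open Finset MeasureTheory

noncomputable section

/-- Squared Euclidean norm of a finite real vector. -/
def sqnorm {m : ℕ} (v : Fin m → ℝ) : ℝ := ∑ j, v j ^ 2

/-- Euclidean norm of a finite real vector. -/
def euclNorm {m : ℕ} (v : Fin m → ℝ) : ℝ := Real.sqrt (sqnorm v)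

/-- Euclidean inner product. -/
def dotp {m : ℕ} (u v : Fin m → ℝ) : ℝ := ∑ j, u j * v j

/-- `g` is the (real-valued) Fenchel conjugate of `f`:
`g u` is the least upper bound of `z ↦ u*z - f z`. -/
def IsFenchelConj (f g : ℝ → ℝ) : Prop :=
  ∀ u : ℝ, IsLUB (Set.range fun z : ℝ => u * z - f z) (g u)

/-- `f` is smooth with constant `c`: differentiable with `c`-Lipschitz derivative. -/
def SmoothWith (c : ℝ) (f : ℝ → ℝ) : Prop :=
  Differentiable ℝ f ∧ ∀ z z' : ℝ, |deriv f z - deriv f z'| ≤ c * |z - z'|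

/-- `g : ℝ → ℝ` is `γ`-strongly convex. -/
def StrongConvexWith (γ : ℝ) (g : ℝ → ℝ) : Prop :=
  ConvexOn ℝ Set.univ fun u => g u - γ / 2 * u ^ 2

variable {n d K : ℕ}

/-- `A α` where the `i`-th column of `A` is `x i / (λ n)`. -/
def matA (lam : ℝ) (x : Fin n → Fin d → ℝ) (α : Fin n → ℝ) : Fin d → ℝ :=
  ∑ i, (α i / (lam * n)) • x i

/-- The block-`k` subvector `α_[k]` of `α`. -/
def blkOf (part : Fin n → Fin K) (k : Fin K) (α : Fin n → ℝ) :
    {i : Fin n // part i = k} → ℝ :=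
  fun i => α i.1

/-- `A_[k] β`: the block-`k` submatrix of `A` applied to a block-`k` vector. -/
def blkA (lam : ℝ) (x : Fin n → Fin d → ℝ) (part : Fin n → Fin K) (k : Fin K)
    (β : {i : Fin n // part i = k} → ℝ) : Fin d → ℝ :=
  ∑ i : {i : Fin n // part i = k}, (β i / (lam * n)) • x i.1

/-- `α⟨k←β⟩`: replace the block-`k` coordinates of `α` by `β`. -/
def updBlk (part : Fin n → Fin K) (k : Fin K) (α : Fin n → ℝ)
    (β : {i : Fin n // part i = k} → ℝ) : Fin n → ℝ :=
  fun i => if h : part i = k then β ⟨i, h⟩ else α i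

/-- `ι_k β`: zero-padding of a block-`k` vector to a full vector. -/
def padBlk (part : Fin n → Fin K) (k : Fin K)
    (β : {i : Fin n // part i = k} → ℝ) : Fin n → ℝ :=
  fun i => if h : part i = k then β ⟨i, h⟩ else 0

/-- The primal objective `P(w)`. -/
def primalObj (lam : ℝ) (x : Fin n → Fin d → ℝ) (l : Fin n → ℝ → ℝ)
    (w : Fin d → ℝ) : ℝ :=
  lam / 2 * sqnorm w + (1 / (n : ℝ)) * ∑ i, l i (dotp w (x i))

/-- The dual objective `D(α)`. -/
def dualObj (lam : ℝ) (x : Fin n → Fin d → ℝ) (lstar : Fin n → ℝ → ℝ)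
    (α : Fin n → ℝ) : ℝ :=
  -(lam / 2) * sqnorm (matA lam x α) - (1 / (n : ℝ)) * ∑ i, lstar i (-(α i))

/-- The local suboptimality `ε_{D,k}(α)` on block `k`. -/
def epsD (lam : ℝ) (x : Fin n → Fin d → ℝ) (lstar : Fin n → ℝ → ℝ)
    (part : Fin n → Fin K) (k : Fin K) (α : Fin n → ℝ) : ℝ :=
  ⨆ β : {i : Fin n // part i = k} → ℝ,
    dualObj lam x lstar (updBlk part k α β) - dualObj lam x lstar α

/-- `σ_min`: the supremum over nonzero `α` of
`λ²n²·(Σ_k ‖A_[k]α_[k]‖² − ‖Aα‖²)/‖α‖²`. -/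
def sigmaMin (lam : ℝ) (x : Fin n → Fin d → ℝ) (part : Fin n → Fin K) : ℝ :=
  sSup { r : ℝ | ∃ α : Fin n → ℝ, α ≠ 0 ∧
    r = lam ^ 2 * (n : ℝ) ^ 2 *
      ((∑ k, sqnorm (blkA lam x part k (blkOf part k α))) - sqnorm (matA lam x α)) /
        sqnorm α }

/-- The local dual objective `D_k(β; w̄)` on block `k`. -/
def locDual (lam : ℝ) (x : Fin n → Fin d → ℝ) (lstar : Fin n → ℝ → ℝ)
    (part : Fin n → Fin K) (k : Fin K) (wbar : Fin d → ℝ)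
    (β : {i : Fin n // part i = k} → ℝ) : ℝ :=
  -(lam / 2) * sqnorm (wbar + blkA lam x part k β)
    - (1 / (n : ℝ)) * ∑ i : {i : Fin n // part i = k}, lstar i.1 (-(β i))
    + lam / 2 * sqnorm wbar

/-- The local primal objective `P_k(v; w̄)` on block `k`. -/
def locPrimal (lam : ℝ) (x : Fin n → Fin d → ℝ) (l : Fin n → ℝ → ℝ)
    (part : Fin n → Fin K) (k : Fin K) (wbar v : Fin d → ℝ) : ℝ :=
  (1 / (n : ℝ)) * ∑ i : {i : Fin n // part i = k}, l i.1 (dotp (wbar + v) (x i.1))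
    + lam / 2 * sqnorm v

/-- Run `H` iterations of the coordinate-wise step `st`, where `ω` lists
the (randomly chosen) coordinates used in the successive iterations. -/
def iterRun {γ : Type*} {ι : Type*} (st : ι → γ → γ) :
    (H : ℕ) → (Fin H → ι) → γ → γ
  | 0, _, b => b
  | H + 1, ω, b => iterRun st H (fun h => ω h.succ) (st (ω 0) b)

/-! The quadratic part `-(λ/2)‖Aα‖²` of `D` is concave because `A` is linear and
`‖η u + (1-η) v‖² + η(1-η)‖u - v‖² = η‖u‖² + (1-η)‖v‖²`; each remaining term
`-(1/n) ℓ_i*(-α_i)` is `(γ/n)`-strongly concave in `α_i`, which produces the extra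
`γ η (1-η)/(2n) ‖α̂ - α‖²`. -/

theorem sqnorm_nonneg {m : ℕ} (v : Fin m → ℝ) : 0 ≤ sqnorm v :=
  Finset.sum_nonneg fun j _ => sq_nonneg (v j)

theorem sqnorm_combo_add {m : ℕ} (η : ℝ) (u v : Fin m → ℝ) :
    sqnorm (η • u + (1 - η) • v) + η * (1 - η) * sqnorm (u - v)
      = η * sqnorm u + (1 - η) * sqnorm v := by
  simp only [sqnorm, mul_sum, ← sum_add_distrib]
  refine sum_congr rfl fun j _ => ?_
  simp only [Pi.add_apply, Pi.sub_apply, Pi.smul_apply, smul_eq_mul]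
  ring

theorem StrongConvexWith.map_combo_add_le {γ : ℝ} {g : ℝ → ℝ} (hg : StrongConvexWith γ g)
    {η : ℝ} (hη0 : 0 ≤ η) (hη1 : η ≤ 1) (a b : ℝ) :
    g (η * a + (1 - η) * b) + γ / 2 * (η * (1 - η)) * (a - b) ^ 2
      ≤ η * g a + (1 - η) * g b := by
  have h := hg.2 (Set.mem_univ a) (Set.mem_univ b) hη0 (sub_nonneg.2 hη1) (by ring)
  simp only [smul_eq_mul] at h
  linear_combination h

theorem sum_map_combo_add_le {ι : Type*} [Fintype ι] {γ : ℝ} {g : ι → ℝ → ℝ}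
    (hg : ∀ i, StrongConvexWith γ (g i)) {η : ℝ} (hη0 : 0 ≤ η) (hη1 : η ≤ 1)
    (a b : ι → ℝ) :
    ∑ i, g i (η * a i + (1 - η) * b i) + γ / 2 * (η * (1 - η)) * ∑ i, (a i - b i) ^ 2
      ≤ η * ∑ i, g i (a i) + (1 - η) * ∑ i, g i (b i) := by
  simp only [mul_sum, ← sum_add_distrib]
  exact sum_le_sum fun i _ => (hg i).map_combo_add_le hη0 hη1 (a i) (b i)

theorem matA_add (lam : ℝ) (x : Fin n → Fin d → ℝ) (α β : Fin n → ℝ) :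
    matA lam x (α + β) = matA lam x α + matA lam x β := by
  simp only [matA, Pi.add_apply, add_div, add_smul, sum_add_distrib]

theorem matA_smul (lam c : ℝ) (x : Fin n → Fin d → ℝ) (α : Fin n → ℝ) :
    matA lam x (c • α) = c • matA lam x α := by
  simp only [matA, Pi.smul_apply, smul_eq_mul, mul_div_assoc, mul_smul, smul_sum]

theorem matA_sub (lam : ℝ) (x : Fin n → Fin d → ℝ) (α β : Fin n → ℝ) :
    matA lam x (α - β) = matA lam x α - matA lam x β := by
  simp only [matA, Pi.sub_apply, sub_div, sub_smul, sum_sub_distrib]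

theorem sqnorm_matA_combo_add (lam η : ℝ) (x : Fin n → Fin d → ℝ) (α αhat : Fin n → ℝ) :
    sqnorm (matA lam x (η • αhat + (1 - η) • α))
        + η * (1 - η) * sqnorm (matA lam x (αhat - α))
      = η * sqnorm (matA lam x αhat) + (1 - η) * sqnorm (matA lam x α) := by
  rw [matA_add, matA_smul, matA_smul, matA_sub, sqnorm_combo_add]

theorem sum_conj_combo_add_le {γ : ℝ} {lstar : Fin n → ℝ → ℝ}
    (hstrong : ∀ i, StrongConvexWith γ (lstar i)) {η : ℝ} (hη0 : 0 ≤ η) (hη1 : η ≤ 1)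
    (α αhat : Fin n → ℝ) :
    ∑ i, lstar i (-(η • αhat + (1 - η) • α) i) + γ / 2 * (η * (1 - η)) * sqnorm (αhat - α)
      ≤ η * ∑ i, lstar i (-αhat i) + (1 - η) * ∑ i, lstar i (-α i) := by
  have harg : ∀ i, -(η • αhat + (1 - η) • α) i = η * -αhat i + (1 - η) * -α i := fun i => by
    simp only [Pi.add_apply, Pi.smul_apply, smul_eq_mul]
    ring
  have hsq : sqnorm (αhat - α) = ∑ i, (-αhat i - -α i) ^ 2 :=
    sum_congr rfl fun i _ => by rw [Pi.sub_apply, neg_sub_neg, ← neg_sub, neg_sq]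
  rw [hsq]
  simp only [harg]
  exact sum_map_combo_add_le hstrong hη0 hη1 (fun i => -αhat i) (fun i => -α i)

theorem dual_strong_concavity_general
    (n d : ℕ)
    (lam γ : ℝ) (hlam : 0 < lam)
    (x : Fin n → Fin d → ℝ)
    (lstar : Fin n → ℝ → ℝ)
    (hstrong : ∀ i, StrongConvexWith γ (lstar i))
    (α αhat : Fin n → ℝ) (η : ℝ) (hη0 : 0 ≤ η) (hη1 : η ≤ 1) :
    η * dualObj lam x lstar αhat + (1 - η) * dualObj lam x lstar α
        + γ * η * (1 - η) / (2 * n) * sqnorm (αhat - α)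
      ≤ dualObj lam x lstar (η • αhat + (1 - η) • α) := by
  have hquad := sqnorm_matA_combo_add lam η x α αhat
  have hconj := mul_le_mul_of_nonneg_left (sum_conj_combo_add_le hstrong hη0 hη1 α αhat)
    (by positivity : (0 : ℝ) ≤ 1 / n)
  have hgap : 0 ≤ lam / 2 * (η * (1 - η) * sqnorm (matA lam x (αhat - α))) :=
    mul_nonneg (by positivity)
      (mul_nonneg (mul_nonneg hη0 (sub_nonneg.2 hη1)) (sqnorm_nonneg _))
  unfold dualObj
  linear_combination hconj + hgap + lam / 2 * hquad

/-- strong concavity estimate for the dual objective. -/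
theorem dual_strong_concavity
    (n d : ℕ) (hn : 0 < n) (hd : 0 < d)
    (lam γ : ℝ) (hlam : 0 < lam) (hγ : 0 ≤ γ)
    (x : Fin n → Fin d → ℝ)
    (l lstar : Fin n → ℝ → ℝ)
    (hconj : ∀ i, IsFenchelConj (l i) (lstar i))
    (hstrong : ∀ i, StrongConvexWith γ (lstar i))
    (α αhat : Fin n → ℝ) (η : ℝ) (hη0 : 0 ≤ η) (hη1 : η ≤ 1) :
    η * dualObj lam x lstar αhat + (1 - η) * dualObj lam x lstar α
        + γ * η * (1 - η) / (2 * n) * sqnorm (αhat - α)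
      ≤ dualObj lam x lstar (η • αhat + (1 - η) • α) :=
  dual_strong_concavity_general n d lam γ hlam x lstar hstrong α αhat η hη0 hη1
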